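/- Let (T_n) be a sequence of Liverani–Saussol–Vaienti maps with parameters γ_n ∈ (0,1) satisfying sup_n γ_n = γ* < 1, and let γ ∈ (0,1). Assume there exist a > 0, κ ∈ (0,1) and N ∈ ℕ such that #{1 ≤ k ≤ n : γ_k ≤ γ}/n ∈ [a(1-κ), a(1+κ)] for all n ≥ N. Let μ be a probability measure on [0,1] with density in the cone C_*(γ). Then, with respect to the reference set Y = [1/2,1], normalized Lebesgue measure m on Y, and return times τ_k(x) = inf{n ≥ 1 : T_{k,k+n-1}(x) ∈ Y}: (1) μ has tail bound r(n) = O(n^{1 − 1/γ}) with respect to T_1, T_2, …, i.e. μ(τ_1 ≥ n) = O(n^{1−1/γ}); and (2) for each k ≥ 1, the function h^k(ℓ) = m(τ_k ≥ ℓ) satisfies h^k(ℓ) ≤ C (1 ∨ (ℓ − Θk))^{-1/γ}, where C is a constant independent of k and Θ = 4κ(1-κ)^{-1}. -/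

import Mathlib

open MeasureTheory Set Filter
open scoped NNReal ENNReal

noncomputable section

/-- `seqComp T k n = T (k+n-1) ∘ ⋯ ∘ T (k+1) ∘ T k`, i.e. the composition `T_{k,k+n-1}`. -/
def seqComp {α : Type*} (T : ℕ → α → α) (k : ℕ) : ℕ → α → α
  | 0 => id
  | n + 1 => fun x => T (k + n) (seqComp T k n x)

/-- First return time to `Y (k+n)`: `τ_k(x) = inf {n ≥ 1 : T_{k,k+n-1}(x) ∈ Y_{k+n}}`. -/
def retTime {α : Type*} (T : ℕ → α → α) (Y : ℕ → Set α) (k : ℕ) (x : α) : ℕ :=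
  sInf {n | 1 ≤ n ∧ seqComp T k n x ∈ Y (k + n)}

/-- The Liverani–Saussol–Vaienti map with parameter `γ`. -/
def lsv (γ : ℝ) (x : ℝ) : ℝ :=
  if x < 1 / 2 then x * (1 + 2 ^ γ * x ^ γ) else 2 * (x - 1 / 2)

/-- Membership in the cone `C_*(β)` (with constant `aβ`). -/
def memConeStar (β aβ : ℝ) (f : ℝ → ℝ) : Prop :=
  ContinuousOn f (Ioc 0 1) ∧ IntegrableOn f (Ioc 0 1) ∧
  (∀ x ∈ Ioc (0:ℝ) 1, 0 ≤ f x) ∧ AntitoneOn f (Ioc 0 1) ∧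
  MonotoneOn (fun x => x ^ (β + 1) * f x) (Ioc 0 1) ∧
  ∀ x ∈ Ioc (0:ℝ) 1, f x ≤ aβ * x ^ (-β) * ∫ t in Ioc (0:ℝ) 1, f t

/-- `ν` is a measure on `[0,1]` whose density lies in the cone `C_*(β)`. -/
def ConeDensity (β aβ : ℝ) (ν : Measure ℝ) : Prop :=
  ∃ f : ℝ → ℝ, memConeStar β aβ f ∧
    ν = (volume.restrict (Icc (0:ℝ) 1)).withDensity fun x => ENNReal.ofReal (f x)


lemma lsv_left {β y : ℝ} (h : y < 1/2) : lsv β y = y * (1 + 2 ^ β * y ^ β) := if_pos h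
lemma lsv_right {β y : ℝ} (h : ¬ y < 1/2) : lsv β y = 2 * (y - 1/2) := if_neg h

lemma lsv_mem {β y : ℝ} (hβ : 0 < β) (hy : y ∈ Icc (0:ℝ) 1) : lsv β y ∈ Icc (0:ℝ) 1 := by
  obtain ⟨hy0, hy1⟩ := hy
  by_cases h : y < 1/2
  · rw [lsv_left h]
    have h2 : (0:ℝ) < 2 ^ β := Real.rpow_pos_of_pos (by norm_num) _
    have hyβ : (0:ℝ) ≤ y ^ β := Real.rpow_nonneg hy0 _
    constructor
    · positivity
    · have h1 : y ^ β ≤ (1/2:ℝ) ^ β := Real.rpow_le_rpow hy0 h.le hβ.le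
      have h3 : ((1:ℝ)/2) ^ β = (2 ^ β)⁻¹ := by
        rw [one_div, Real.inv_rpow (by norm_num)]
      have h4 : 2 ^ β * y ^ β ≤ 1 := by
        calc 2 ^ β * y ^ β ≤ 2 ^ β * (2 ^ β)⁻¹ := by
              rw [← h3]; exact mul_le_mul_of_nonneg_left h1 h2.le
          _ = 1 := mul_inv_cancel₀ h2.ne'
      calc y * (1 + 2 ^ β * y ^ β) ≤ (1/2) * (1 + 1) := by
            apply mul_le_mul h.le (by linarith) (by positivity) (by norm_num)
        _ = 1 := by norm_num
  · rw [lsv_right h]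
    push_neg at h
    constructor <;> linarith

lemma lsv_pos {β y : ℝ} (h : y < 1/2) (hy : 0 < y) : 0 < lsv β y := by
  rw [lsv_left h]
  have h2 : (0:ℝ) < 2 ^ β := Real.rpow_pos_of_pos (by norm_num) _
  have hyβ : (0:ℝ) ≤ y ^ β := Real.rpow_nonneg hy.le _
  positivity

lemma le_lsv {β y : ℝ} (h : y < 1/2) (hy : 0 ≤ y) : y ≤ lsv β y := by
  rw [lsv_left h]
  have h2 : (0:ℝ) < 2 ^ β := Real.rpow_pos_of_pos (by norm_num) _
  have hyβ : (0:ℝ) ≤ y ^ β := Real.rpow_nonneg hy _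
  nlinarith [mul_nonneg hy (mul_nonneg h2.le hyβ)]

/-- Concavity chord bound: `1 + (2^γ - 1) t ≤ (1+t)^γ` for `t ∈ [0,1]`. -/
lemma chord {γ t : ℝ} (hγ : γ ∈ Ioo (0:ℝ) 1) (ht0 : 0 ≤ t) (ht1 : t ≤ 1) :
    1 + (2 ^ γ - 1) * t ≤ (1 + t) ^ γ := by
  have hc := (Real.strictConcaveOn_rpow hγ.1 hγ.2).concaveOn
  have h := hc.2 (show (1:ℝ) ∈ Ici (0:ℝ) by norm_num) (show (2:ℝ) ∈ Ici (0:ℝ) by norm_num)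
    (show (0:ℝ) ≤ 1 - t by linarith) ht0 (show (1-t) + t = 1 by ring)
  simp only [smul_eq_mul, Real.one_rpow] at h
  have he : (1 - t) * 1 + t * 2 = 1 + t := by ring
  rw [he] at h
  linarith

/-- `(1+t)^{-γ} ≤ 1 - ((2^γ-1)/2) t` for `t ∈ (0,1]`. -/
lemma claimC {γ t : ℝ} (hγ : γ ∈ Ioo (0:ℝ) 1) (ht0 : 0 < t) (ht1 : t ≤ 1) :
    (1 + t) ^ (-γ) ≤ 1 - (2 ^ γ - 1)/2 * t := by
  have h1 : (1:ℝ) < 2 ^ γ := Real.one_lt_rpow_iff_of_pos (by norm_num) |>.mpr (Or.inl ⟨by norm_num, hγ.1⟩)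
  have h2 : (2:ℝ) ^ γ ≤ 2 := by
    calc (2:ℝ) ^ γ ≤ 2 ^ (1:ℝ) := Real.rpow_le_rpow_of_exponent_le (by norm_num) hγ.2.le
      _ = 2 := Real.rpow_one 2
  have hA : 1 + (2 ^ γ - 1) * t ≤ (1 + t) ^ γ := chord hγ ht0.le ht1
  have hApos : (0:ℝ) < 1 + (2 ^ γ - 1) * t := by nlinarith
  have hneg : (1 + t) ^ (-γ) = ((1 + t) ^ γ)⁻¹ := Real.rpow_neg (by linarith) _
  rw [hneg]
  have hinv : ((1 + t) ^ γ)⁻¹ ≤ (1 + (2 ^ γ - 1) * t)⁻¹ :=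
    inv_anti₀ hApos hA
  refine hinv.trans ?_
  rw [inv_le_iff_one_le_mul₀ hApos]
  have hst : (2 ^ γ - 1) * t ≤ 1 := by nlinarith
  have h5 : 0 ≤ (2 ^ γ - 1) * t * (1 - (2 ^ γ - 1) * t) := by
    apply mul_nonneg (mul_nonneg (by linarith) ht0.le) (by linarith)
  nlinarith

/-- Good step: if `β ≤ γ` then `(lsv β y)^{-γ} ≤ y^{-γ} - (2^γ-1)/2`. -/
lemma good_step {γ β y : ℝ} (hγ : γ ∈ Ioo (0:ℝ) 1) (hβ : β ∈ Ioo (0:ℝ) 1) (hβγ : β ≤ γ)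
    (hy0 : 0 < y) (hy : y < 1/2) :
    (lsv β y) ^ (-γ) ≤ y ^ (-γ) - (2 ^ γ - 1)/2 := by
  set t : ℝ := y ^ γ with hts
  have hy1 : y < 1 := by linarith
  have ht0 : 0 < t := Real.rpow_pos_of_pos hy0 _
  have ht1 : t < 1 := Real.rpow_lt_one hy0.le hy1 hγ.1
  have h2β : (1:ℝ) ≤ 2 ^ β := Real.one_le_rpow (by norm_num) hβ.1.le
  have hyβ : t ≤ y ^ β := Real.rpow_le_rpow_of_exponent_ge hy0 hy1.le hβγ
  have hstep : y * (1 + t) ≤ lsv β y := by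
    rw [lsv_left hy]
    have : t ≤ 2 ^ β * y ^ β := by
      calc t ≤ y ^ β := hyβ
        _ = 1 * y ^ β := (one_mul _).symm
        _ ≤ 2 ^ β * y ^ β := by
            apply mul_le_mul_of_nonneg_right h2β (Real.rpow_nonneg hy0.le _)
    nlinarith
  have hyt : 0 < y * (1 + t) := by positivity
  have h1 : (lsv β y) ^ (-γ) ≤ (y * (1 + t)) ^ (-γ) :=
    Real.rpow_le_rpow_of_nonpos hyt hstep (by linarith [hγ.1])
  have h2 : (y * (1 + t)) ^ (-γ) = y ^ (-γ) * (1 + t) ^ (-γ) :=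
    Real.mul_rpow hy0.le (by linarith)
  have h3 : (1 + t) ^ (-γ) ≤ 1 - (2 ^ γ - 1)/2 * t := claimC hγ ht0 ht1.le
  have hynn : (0:ℝ) < y ^ (-γ) := Real.rpow_pos_of_pos hy0 _
  have hkey : y ^ (-γ) * t = 1 := by
    rw [hts, ← Real.rpow_add hy0]
    simp
  calc (lsv β y) ^ (-γ) ≤ y ^ (-γ) * (1 + t) ^ (-γ) := by rw [← h2]; exact h1
    _ ≤ y ^ (-γ) * (1 - (2 ^ γ - 1)/2 * t) := by
        apply mul_le_mul_of_nonneg_left h3 hynn.le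
    _ = y ^ (-γ) - (2 ^ γ - 1)/2 * (y ^ (-γ) * t) := by ring
    _ = y ^ (-γ) - (2 ^ γ - 1)/2 := by rw [hkey, mul_one]

/-- Neutral step: `(lsv β y)^{-γ} ≤ y^{-γ}`. -/
lemma any_step {γ β y : ℝ} (hγ : γ ∈ Ioo (0:ℝ) 1) (hy0 : 0 < y) (hy : y < 1/2) :
    (lsv β y) ^ (-γ) ≤ y ^ (-γ) :=
  Real.rpow_le_rpow_of_nonpos hy0 (le_lsv hy hy0.le) (by linarith [hγ.1])

/-- Core orbit escape bound. -/
lemma orbit_bound (γs : ℕ → ℝ) (hmem : ∀ n, 1 ≤ n → γs n ∈ Ioo (0:ℝ) 1)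
    (γ : ℝ) (hγ : γ ∈ Ioo (0:ℝ) 1) (w : ℕ → ℝ) (k₀ M : ℕ) (hk₀ : 1 ≤ k₀)
    (horb : ∀ j, j < M → w (j+1) = lsv (γs (k₀+j)) (w j))
    (hw : ∀ j, j ≤ M → w j ∈ Ico (0:ℝ) (1/2)) :
    w 0 ≤ ((2 ^ γ - 1)/2 *
      (1 + (((Finset.range M).filter fun i => γs (k₀+i) ≤ γ).card : ℝ))) ^ (-(1/γ)) := by
  set δ : ℝ := (2 ^ γ - 1)/2 with hδs
  have h2γ : (1:ℝ) < 2 ^ γ := Real.one_lt_rpow_iff_of_pos (by norm_num) |>.mpr (Or.inl ⟨by norm_num, hγ.1⟩)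
  have h2γ2 : (2:ℝ) ^ γ ≤ 2 := by
    calc (2:ℝ) ^ γ ≤ 2 ^ (1:ℝ) := Real.rpow_le_rpow_of_exponent_le (by norm_num) hγ.2.le
      _ = 2 := Real.rpow_one 2
  have hδ : 0 < δ := by rw [hδs]; linarith
  have hδ1 : δ ≤ 1 := by rw [hδs]; linarith
  rcases eq_or_lt_of_le (hw 0 (Nat.zero_le _)).1 with h0 | h0
  · rw [← h0]
    exact Real.rpow_nonneg (by positivity) _
  · -- main induction
    have key : ∀ j, j ≤ M → 0 < w j ∧
        (w j) ^ (-γ) + δ * (((Finset.range j).filter fun i => γs (k₀+i) ≤ γ).card : ℝ)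
          ≤ (w 0) ^ (-γ) := by
      intro j
      induction j with
      | zero => intro _; simpa using h0
      | succ j ih =>
        intro hj
        obtain ⟨hpos, hsum⟩ := ih (by omega)
        have hjM : j < M := by omega
        have hwj := hw j (by omega)
        have hrel := horb j hjM
        have hβ : γs (k₀+j) ∈ Ioo (0:ℝ) 1 := hmem _ (by omega)
        have hcard : (Finset.range (j+1)).filter (fun i => γs (k₀+i) ≤ γ) =
            if γs (k₀+j) ≤ γ then insert j ((Finset.range j).filter fun i => γs (k₀+i) ≤ γ)
            else (Finset.range j).filter fun i => γs (k₀+i) ≤ γ := by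
          rw [Finset.range_add_one, Finset.filter_insert]
        constructor
        · rw [hrel]; exact lsv_pos hwj.2 hpos
        · by_cases hgood : γs (k₀+j) ≤ γ
          · have hstep := good_step hγ hβ hgood hpos hwj.2
            rw [hrel]
            have hc2 : (((Finset.range (j+1)).filter fun i => γs (k₀+i) ≤ γ).card : ℝ)
                = (((Finset.range j).filter fun i => γs (k₀+i) ≤ γ).card : ℝ) + 1 := by
              rw [hcard, if_pos hgood, Finset.card_insert_of_notMem (by simp)]
              push_cast; ring
            rw [hc2]
            have : (lsv (γs (k₀+j)) (w j)) ^ (-γ) ≤ (w j) ^ (-γ) - δ := hstep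
            linarith
          · have hstep := any_step (β := γs (k₀+j)) hγ hpos hwj.2
            rw [hrel]
            have hc2 : (((Finset.range (j+1)).filter fun i => γs (k₀+i) ≤ γ).card : ℝ)
                = (((Finset.range j).filter fun i => γs (k₀+i) ≤ γ).card : ℝ) := by
              rw [hcard, if_neg hgood]
            rw [hc2]
            linarith
    obtain ⟨hMpos, hMsum⟩ := key M le_rfl
    have hwM := hw M le_rfl
    have hM1 : (1:ℝ) ≤ (w M) ^ (-γ) := by
      have := Real.rpow_le_rpow_of_nonpos hMpos (by linarith [hwM.2] : w M ≤ 1)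
        (by linarith [hγ.1] : -γ ≤ 0)
      simpa using this
    set G : ℝ := (((Finset.range M).filter fun i => γs (k₀+i) ≤ γ).card : ℝ) with hGs
    have hG0 : 0 ≤ G := by positivity
    have hlow : δ * (1 + G) ≤ (w 0) ^ (-γ) := by nlinarith
    have hApos : 0 < δ * (1 + G) := by positivity
    have h1 : (w 0 ^ (-γ)) ^ (-(1/γ)) ≤ (δ * (1 + G)) ^ (-(1/γ)) :=
      Real.rpow_le_rpow_of_nonpos hApos hlow
        (neg_nonpos.mpr (le_of_lt (div_pos one_pos hγ.1)))
    have h2 : (w 0 ^ (-γ)) ^ (-(1/γ)) = w 0 := by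
      rw [← Real.rpow_mul h0.le]
      have : (-γ) * (-(1/γ)) = 1 := by
        rw [neg_mul_neg, mul_one_div, div_self (ne_of_gt hγ.1)]
      rw [this, Real.rpow_one]
    rw [← h2]; exact h1

lemma count_shift (p : ℕ → Prop) [DecidablePred p] (k₀ M : ℕ) (hk₀ : 1 ≤ k₀) :
    ((Finset.Icc 1 (k₀-1+M)).filter p).card ≤
      ((Finset.Icc 1 (k₀-1)).filter p).card +
      ((Finset.range M).filter fun i => p (k₀+i)).card := by
  have hsub : (Finset.Icc 1 (k₀-1+M)).filter p ⊆
      ((Finset.Icc 1 (k₀-1)).filter p) ∪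
        ((Finset.range M).filter fun i => p (k₀+i)).image (fun i => k₀+i) := by
    intro i hi
    simp only [Finset.mem_filter, Finset.mem_Icc] at hi
    obtain ⟨⟨h1, h2⟩, hp⟩ := hi
    by_cases hle : i ≤ k₀ - 1
    · exact Finset.mem_union_left _ (by simp [Finset.mem_filter, Finset.mem_Icc, h1, hle, hp])
    · apply Finset.mem_union_right
      simp only [Finset.mem_image, Finset.mem_filter, Finset.mem_range]
      refine ⟨i - k₀, ⟨by omega, ?_⟩, by omega⟩
      have : k₀ + (i - k₀) = i := by omega
      rw [this]; exact hp
  refine (Finset.card_le_card hsub).trans ((Finset.card_union_le _ _).trans ?_)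
  exact Nat.add_le_add_left Finset.card_image_le _

lemma seqComp_mem (γs : ℕ → ℝ) (hmem : ∀ n, 1 ≤ n → γs n ∈ Ioo (0:ℝ) 1)
    (k : ℕ) (hk : 1 ≤ k) (x : ℝ) (hx : x ∈ Icc (0:ℝ) 1) :
    ∀ n, seqComp (fun i => lsv (γs i)) k n x ∈ Icc (0:ℝ) 1 := by
  intro n
  induction n with
  | zero => exact hx
  | succ n ih => exact lsv_mem (hmem (k+n) (by omega)).1 ih

lemma tau_excursion {γs : ℕ → ℝ} {Y : Set ℝ} {k ℓ : ℕ} {x : ℝ}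
    (h : ℓ ≤ sInf {n | 1 ≤ n ∧ seqComp (fun i => lsv (γs i)) k n x ∈ Y}) :
    ∀ n, 1 ≤ n → n < ℓ → seqComp (fun i => lsv (γs i)) k n x ∉ Y := by
  intro n h1 h2 hmem
  have : sInf {n | 1 ≤ n ∧ seqComp (fun i => lsv (γs i)) k n x ∈ Y} ≤ n :=
    Nat.sInf_le ⟨h1, hmem⟩
  omega

lemma lint_rpow {γ K b' : ℝ} (hγ : γ ∈ Ioo (0:ℝ) 1) (hK : 0 ≤ K) (hb0 : 0 < b') :
    ∫⁻ x in Ioc (0:ℝ) b', ENNReal.ofReal (K * x ^ (-γ)) ≤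
      ENNReal.ofReal (K * b' ^ (1-γ) / (1-γ)) := by
  have hint : IntegrableOn (fun x : ℝ => x ^ (-γ)) (Ioc 0 b') volume := by
    have := (intervalIntegral.intervalIntegrable_rpow' (a := 0) (b := b')
      (r := -γ) (by linarith [hγ.2]))
    rw [intervalIntegrable_iff_integrableOn_Ioc_of_le hb0.le] at this
    exact this
  have hint2 : IntegrableOn (fun x : ℝ => K * x ^ (-γ)) (Ioc 0 b') volume :=
    hint.const_mul K
  have hnn : 0 ≤ᵐ[volume.restrict (Ioc (0:ℝ) b')] fun x => K * x ^ (-γ) := by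
    exact (ae_restrict_iff' measurableSet_Ioc).mpr
      (.of_forall fun x hx => mul_nonneg hK (Real.rpow_nonneg hx.1.le _))
  rw [← MeasureTheory.ofReal_integral_eq_lintegral_ofReal hint2 hnn]
  apply ENNReal.ofReal_le_ofReal
  rw [integral_const_mul]
  rw [← intervalIntegral.integral_of_le hb0.le]
  rw [integral_rpow (Or.inl (by linarith [hγ.2]))]
  rw [Real.zero_rpow (by intro h; nlinarith [hγ.2] : -γ + 1 ≠ 0)]
  have : -γ + 1 = 1 - γ := by ring
  rw [this, sub_zero, mul_div_assoc]

set_option maxHeartbeats 1000000 in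
lemma part1 (γs : ℕ → ℝ) (hmem : ∀ n, 1 ≤ n → γs n ∈ Ioo (0:ℝ) 1)
    (γ : ℝ) (hγ : γ ∈ Ioo (0:ℝ) 1) (aβ : ℝ) (haβ : 2 ^ γ * (γ + 2) < aβ)
    (a : ℝ) (ha : 0 < a) (κ : ℝ) (hκ : κ ∈ Ioo (0:ℝ) 1) (N : ℕ)
    (hfreq : ∀ n : ℕ, N ≤ n → 1 ≤ n →
      (((Finset.Icc 1 n).filter fun k => γs k ≤ γ).card : ℝ) / n ∈
        Icc (a * (1 - κ)) (a * (1 + κ)))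
    (μ : Measure ℝ) (hμ : IsProbabilityMeasure μ)
    (f : ℝ → ℝ) (hf_int : IntegrableOn f (Ioc 0 1))
    (hf_nn : ∀ x ∈ Ioc (0:ℝ) 1, 0 ≤ f x)
    (hf_bd : ∀ x ∈ Ioc (0:ℝ) 1, f x ≤ aβ * x ^ (-γ) * ∫ t in Ioc (0:ℝ) 1, f t)
    (hμdef : μ = (volume.restrict (Icc (0:ℝ) 1)).withDensity fun x => ENNReal.ofReal (f x))
    (Y : Set ℝ) (hY : Y = Icc (1/2 : ℝ) 1)
    (τ : ℕ → ℝ → ℕ) (hτ : τ = retTime (fun i => lsv (γs i)) fun _ => Y) :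
    ∃ C : ℝ, ∀ n : ℕ, 1 ≤ n →
      μ {x | n ≤ τ 1 x} ≤ ENNReal.ofReal (C * (n : ℝ) ^ (1 - 1/γ)) := by
  haveI := hμ
  obtain ⟨hγ0, hγ1⟩ := hγ
  obtain ⟨hκ0, hκ1⟩ := hκ
  have h2γ : (1:ℝ) < 2 ^ γ :=
    Real.one_lt_rpow_iff_of_pos (by norm_num) |>.mpr (Or.inl ⟨by norm_num, hγ0⟩)
  have haβ0 : 0 < aβ := lt_trans (by positivity) haβ
  set I : ℝ := ∫ t in Ioc (0:ℝ) 1, f t with hIs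
  have hI0 : 0 ≤ I := setIntegral_nonneg measurableSet_Ioc hf_nn
  set δ : ℝ := (2 ^ γ - 1)/2 with hδs
  have hδ : 0 < δ := by rw [hδs]; linarith
  set c : ℝ := δ * (a * (1-κ)) / 2 with hcs
  have hc : 0 < c := by rw [hcs]; have : 0 < 1 - κ := by linarith
                        positivity
  set K : ℝ := aβ * 2 ^ γ * I with hKs
  have hK0 : 0 ≤ K := by rw [hKs]; positivity
  set C₁ : ℝ := aβ * I * c ^ (1-1/γ) / (1-γ) with hC1s
  have hC10 : 0 ≤ C₁ := by
    rw [hC1s]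
    have h1 : 0 < 1 - γ := by linarith
    have := Real.rpow_nonneg hc.le (1-1/γ)
    positivity
  set C₂ : ℝ := K * c ^ (-(1/γ)) / 2 with hC2s
  have hC20 : 0 ≤ C₂ := by
    rw [hC2s]; have := Real.rpow_nonneg hc.le (-(1/γ)); positivity
  set C : ℝ := max (C₁ + C₂) (((N:ℝ)+2) ^ (1/γ-1)) with hCs
  have hC0 : 0 ≤ C := le_trans (Real.rpow_nonneg (by positivity) _) (le_max_right _ _)
  have hexp : 1 - 1/γ ≤ 0 := by
    have : (1:ℝ) ≤ 1/γ := by rw [le_div_iff₀ hγ0]; linarith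
    linarith
  refine ⟨C, fun n hn => ?_⟩
  by_cases hbig : N + 2 ≤ n
  · -- main case
    have hn2 : 2 ≤ n := by omega
    have hnR : (2:ℝ) ≤ (n:ℝ) := by exact_mod_cast hn2
    have hnpos : (0:ℝ) < n := by linarith
    set b : ℝ := (c * n) ^ (-(1/γ)) with hbs
    have hcn : 0 < c * n := by positivity
    have hb0 : 0 < b := Real.rpow_pos_of_pos hcn _
    -- the frequency count
    have hF : a * (1-κ) * ((n:ℝ)-1) ≤
        (((Finset.Icc 1 (n-1)).filter fun k => γs k ≤ γ).card : ℝ) := by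
      have h1 : N ≤ n - 1 := by omega
      have h2 : 1 ≤ n - 1 := by omega
      have := (hfreq (n-1) h1 h2).1
      have hpos : (0:ℝ) < ((n-1 : ℕ):ℝ) := by
        have : (1:ℝ) ≤ ((n-1:ℕ):ℝ) := by exact_mod_cast h2
        linarith
      rw [le_div_iff₀ hpos] at this
      calc a * (1-κ) * ((n:ℝ)-1) = a * (1-κ) * ((n-1:ℕ):ℝ) := by
            congr 1
            push_cast [Nat.cast_sub (by omega : 1 ≤ n)]
            ring
        _ ≤ _ := this
    -- inclusion
    have hsub : {x | n ≤ τ 1 x} ⊆ Icc 0 b ∪ Icc (1/2) (1/2 + b/2) ∪ (Icc (0:ℝ) 1)ᶜ := by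
      intro x hx
      by_cases hx01 : x ∈ Icc (0:ℝ) 1
      swap
      · exact Or.inr hx01
      simp only [mem_setOf_eq] at hx
      rw [hτ] at hx
      unfold retTime at hx
      have hesc : ∀ j, 1 ≤ j → j < n →
          seqComp (fun i => lsv (γs i)) 1 j x ∉ Y := tau_excursion hx
      have hy : ∀ j, 1 ≤ j → j ≤ n - 1 →
          seqComp (fun i => lsv (γs i)) 1 j x ∈ Ico (0:ℝ) (1/2) := by
        intro j h1 h2
        have hmem' := seqComp_mem γs hmem 1 le_rfl x hx01 j
        refine ⟨hmem'.1, ?_⟩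
        by_contra hcon
        push_neg at hcon
        exact hesc j h1 (by omega) (hY ▸ ⟨hcon, hmem'.2⟩)
      by_cases hxhalf : x < 1/2
      · -- left case
        have hob := orbit_bound γs hmem γ ⟨hγ0, hγ1⟩
          (fun j => seqComp (fun i => lsv (γs i)) 1 j x) 1 (n-1) le_rfl
          (fun j hj => rfl)
          (fun j hj => by
            rcases Nat.eq_zero_or_pos j with h | h
            · subst h; exact ⟨hx01.1, hxhalf⟩
            · exact hy j h hj)
        set G : ℕ := ((Finset.range (n-1)).filter fun i => γs (1+i) ≤ γ).card with hGs
        have hcount : (((Finset.Icc 1 (n-1)).filter fun k => γs k ≤ γ).card : ℕ) ≤ G := by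
          have h1 := count_shift (fun k => γs k ≤ γ) 1 (n-1) le_rfl
          have h2 : (1:ℕ) - 1 + (n-1) = n - 1 := by omega
          rw [h2] at h1
          have h3 : ((Finset.Icc 1 (1-1)).filter fun k => γs k ≤ γ).card = 0 := by
            rw [show (1:ℕ)-1 = 0 from rfl, Finset.Icc_eq_empty (by omega), Finset.filter_empty,
              Finset.card_empty]
          rw [h3] at h1
          simpa using h1
        have hG : a * (1-κ) * ((n:ℝ)-1) ≤ (G:ℝ) :=
          le_trans hF (by exact_mod_cast hcount)
        have hlow : c * n ≤ δ * (1 + (G:ℝ)) := by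
          have h1 : a * (1-κ) * ((n:ℝ)/2) ≤ a * (1-κ) * ((n:ℝ)-1) := by
            have h3 : 0 < 1 - κ := by linarith
            have h2 : (n:ℝ)/2 ≤ (n:ℝ)-1 := by linarith
            have := mul_le_mul_of_nonneg_left h2 (by positivity : (0:ℝ) ≤ a * (1-κ))
            linarith
          have h6 : a * (1-κ) * ((n:ℝ)/2) ≤ (G:ℝ) := le_trans h1 hG
          calc c * n = δ * (a * (1-κ) * ((n:ℝ)/2)) := by rw [hcs]; ring
            _ ≤ δ * (G:ℝ) := mul_le_mul_of_nonneg_left h6 hδ.le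
            _ ≤ δ * (1 + (G:ℝ)) := mul_le_mul_of_nonneg_left (by linarith) hδ.le
        have hxb : x ≤ b := by
          refine le_trans hob ?_
          rw [hbs]
          exact Real.rpow_le_rpow_of_nonpos hcn hlow
            (neg_nonpos.mpr (le_of_lt (div_pos one_pos hγ0)))
        exact Or.inl (Or.inl ⟨hx01.1, hxb⟩)
      · -- right case
        push_neg at hxhalf
        have hob := orbit_bound γs hmem γ ⟨hγ0, hγ1⟩
          (fun j => seqComp (fun i => lsv (γs i)) 1 (j+1) x) 2 (n-2) (by omega)
          (fun j hj => by
            show lsv (γs (1+(j+1))) _ = lsv (γs (2+j)) _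
            rw [show 1+(j+1) = 2+j from by omega])
          (fun j hj => hy (j+1) (by omega) (by omega))
        set G : ℕ := ((Finset.range (n-2)).filter fun i => γs (2+i) ≤ γ).card with hGs
        have hcount : ((Finset.Icc 1 (n-1)).filter fun k => γs k ≤ γ).card ≤ 1 + G := by
          have h1 := count_shift (fun k => γs k ≤ γ) 2 (n-2) (by omega)
          have h2 : 2 - 1 + (n - 2) = n - 1 := by omega
          rw [h2] at h1
          have hjg : ((Finset.range (n-2)).filter fun i => (fun k => γs k ≤ γ) (2+i)).card
              = G := rfl
          rw [hjg] at h1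
          refine h1.trans ?_
          have h5 : ((Finset.Icc 1 (2-1)).filter fun k => γs k ≤ γ).card ≤ 1 := by
            refine le_trans (Finset.card_filter_le _ _) ?_
            simp
          omega
        have hG : a * (1-κ) * ((n:ℝ)-1) ≤ 1 + (G:ℝ) := by
          refine le_trans hF ?_
          have : (((Finset.Icc 1 (n-1)).filter fun k => γs k ≤ γ).card : ℝ) ≤ 1 + (G:ℝ) := by
            exact_mod_cast hcount
          linarith
        have hlow : c * n ≤ δ * (1 + (G:ℝ)) := by
          have h2 : (n:ℝ)/2 ≤ (n:ℝ)-1 := by linarith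
          have h3 : 0 < 1 - κ := by linarith
          have h4 := mul_le_mul_of_nonneg_left h2 (by positivity : (0:ℝ) ≤ a * (1-κ))
          have h6 : a * (1-κ) * ((n:ℝ)/2) ≤ 1 + (G:ℝ) := by linarith
          calc c * n = δ * (a * (1-κ) * ((n:ℝ)/2)) := by rw [hcs]; ring
            _ ≤ δ * (1 + (G:ℝ)) := mul_le_mul_of_nonneg_left h6 hδ.le
        have hw0 : (fun j => seqComp (fun i => lsv (γs i)) 1 (j+1) x) 0 = 2 * (x - 1/2) := by
          show lsv (γs (1+0)) (seqComp _ 1 0 x) = _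
          exact lsv_right (not_lt.mpr hxhalf)
        rw [show seqComp (fun i => lsv (γs i)) 1 (0+1) x = 2 * (x - 1/2) from hw0] at hob
        have hxb : 2 * (x - 1/2) ≤ b := by
          refine le_trans hob ?_
          rw [hbs]
          exact Real.rpow_le_rpow_of_nonpos hcn hlow
            (neg_nonpos.mpr (le_of_lt (div_pos one_pos hγ0)))
        exact Or.inl (Or.inr ⟨hxhalf, by linarith⟩)
    -- measure estimates
    have hmeas : μ {x | n ≤ τ 1 x} ≤
        μ (Icc 0 b) + μ (Icc (1/2) (1/2+b/2)) + μ ((Icc (0:ℝ) 1)ᶜ) := by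
      refine (measure_mono hsub).trans ?_
      refine (measure_union_le _ _).trans ?_
      exact add_le_add (measure_union_le _ _) le_rfl
    have hcompl : μ ((Icc (0:ℝ) 1)ᶜ) = 0 := by
      rw [hμdef, withDensity_apply _ measurableSet_Icc.compl,
        Measure.restrict_restrict measurableSet_Icc.compl, compl_inter_self,
        Measure.restrict_empty, lintegral_zero_measure]
    set b' : ℝ := min b 1 with hb's
    have hb'0 : 0 < b' := lt_min hb0 one_pos
    have hb'b : b' ≤ b := min_le_left _ _
    have hA : μ (Icc 0 b) ≤ ENNReal.ofReal (aβ * I * b' ^ (1-γ) / (1-γ)) := by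
      rw [hμdef, withDensity_apply _ measurableSet_Icc,
        Measure.restrict_restrict measurableSet_Icc]
      have hinter : Icc (0:ℝ) b ∩ Icc 0 1 = Icc 0 b' := by
        rw [Icc_inter_Icc]
        congr 1
        simp
      rw [hinter, setLIntegral_congr (Ioc_ae_eq_Icc (μ := volume) (a := (0:ℝ)) (b := b')).symm]
      have hptw : ∀ x ∈ Ioc (0:ℝ) b', ENNReal.ofReal (f x) ≤
          ENNReal.ofReal ((aβ * I) * x ^ (-γ)) := by
        intro x hx
        apply ENNReal.ofReal_le_ofReal
        have hx1 : x ∈ Ioc (0:ℝ) 1 := ⟨hx.1, le_trans hx.2 (min_le_right _ _)⟩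
        calc f x ≤ aβ * x ^ (-γ) * I := hf_bd x hx1
          _ = (aβ * I) * x ^ (-γ) := by ring
      have hmg : Measurable fun x : ℝ => ENNReal.ofReal ((aβ * I) * x ^ (-γ)) := by
        fun_prop
      refine le_trans (setLIntegral_mono hmg hptw) ?_
      exact le_trans (lint_rpow ⟨hγ0, hγ1⟩ (by positivity) hb'0) (le_of_eq (by ring_nf))
    have hA2 : aβ * I * b' ^ (1-γ) / (1-γ) ≤ C₁ * (n:ℝ) ^ (1-1/γ) := by
      have hbb : b' ^ (1-γ) ≤ b ^ (1-γ) :=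
        Real.rpow_le_rpow hb'0.le hb'b (by linarith)
      have hbg : b ^ (1-γ) = c ^ (1-1/γ) * (n:ℝ) ^ (1-1/γ) := by
        rw [hbs]
        rw [← Real.rpow_mul hcn.le]
        have he : (-(1/γ)) * (1-γ) = 1 - 1/γ := by
          field_simp; ring
        rw [he, Real.mul_rpow hc.le (Nat.cast_nonneg n)]
      have h1g : 0 < 1 - γ := by linarith
      calc aβ * I * b' ^ (1-γ) / (1-γ) ≤ aβ * I * b ^ (1-γ) / (1-γ) := by
            gcongr
        _ = C₁ * (n:ℝ) ^ (1-1/γ) := by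
            rw [hbg, hC1s]
            ring
    have hB : μ (Icc (1/2:ℝ) (1/2+b/2)) ≤ ENNReal.ofReal (K * (b/2)) := by
      rw [hμdef, withDensity_apply _ measurableSet_Icc,
        Measure.restrict_restrict measurableSet_Icc]
      have hptw : ∀ x ∈ Icc (1/2:ℝ) (1/2+b/2) ∩ Icc 0 1,
          ENNReal.ofReal (f x) ≤ ENNReal.ofReal K := by
        intro x hx
        apply ENNReal.ofReal_le_ofReal
        have hx1 : x ∈ Ioc (0:ℝ) 1 := ⟨lt_of_lt_of_le (by norm_num) hx.1.1, hx.2.2⟩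
        refine (hf_bd x hx1).trans ?_
        have hxg : x ^ (-γ) ≤ (2:ℝ) ^ γ := by
          have h1 : x ^ (-γ) ≤ ((1:ℝ)/2) ^ (-γ) :=
            Real.rpow_le_rpow_of_nonpos (by norm_num) hx.1.1 (by linarith)
          have h2 : ((1:ℝ)/2) ^ (-γ) = 2 ^ γ := by
            rw [one_div, Real.inv_rpow (by norm_num), Real.rpow_neg (by norm_num), inv_inv]
          linarith
        have h3 := mul_le_mul_of_nonneg_right
          (mul_le_mul_of_nonneg_left hxg haβ0.le) hI0
        calc aβ * x ^ (-γ) * I ≤ aβ * 2 ^ γ * I := h3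
          _ = K := by rw [hKs]
      refine le_trans (setLIntegral_mono measurable_const hptw) ?_
      rw [setLIntegral_const]
      have hvol : volume (Icc (1/2:ℝ) (1/2+b/2) ∩ Icc 0 1) ≤ ENNReal.ofReal (b/2) := by
        refine le_trans (measure_mono (inter_subset_left)) ?_
        rw [Real.volume_Icc]
        apply ENNReal.ofReal_le_ofReal
        ring_nf
        exact le_rfl
      calc ENNReal.ofReal K * volume (Icc (1/2:ℝ) (1/2+b/2) ∩ Icc 0 1)
          ≤ ENNReal.ofReal K * ENNReal.ofReal (b/2) := mul_le_mul_right hvol _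
        _ = ENNReal.ofReal (K * (b/2)) := (ENNReal.ofReal_mul hK0).symm
    have hB2 : K * (b/2) ≤ C₂ * (n:ℝ) ^ (1-1/γ) := by
      have hbsplit : b = c ^ (-(1/γ)) * (n:ℝ) ^ (-(1/γ)) := by
        rw [hbs, Real.mul_rpow hc.le (Nat.cast_nonneg n)]
      have hnexp : (n:ℝ) ^ (-(1/γ)) ≤ (n:ℝ) ^ (1-1/γ) := by
        apply Real.rpow_le_rpow_of_exponent_le (by exact_mod_cast hn)
        linarith
      have hcnn : 0 ≤ c ^ (-(1/γ)) := Real.rpow_nonneg hc.le _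
      calc K * (b/2) = C₂ * (n:ℝ) ^ (-(1/γ)) := by
            rw [hbsplit, hC2s]
            ring
        _ ≤ C₂ * (n:ℝ) ^ (1-1/γ) := mul_le_mul_of_nonneg_left hnexp hC20
    have htot : μ {x | n ≤ τ 1 x} ≤
        ENNReal.ofReal (C₁ * (n:ℝ) ^ (1-1/γ)) + ENNReal.ofReal (C₂ * (n:ℝ) ^ (1-1/γ)) := by
      rw [hcompl] at hmeas
      rw [add_zero] at hmeas
      exact hmeas.trans (add_le_add (hA.trans (ENNReal.ofReal_le_ofReal hA2))
        (hB.trans (ENNReal.ofReal_le_ofReal hB2)))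
    refine htot.trans ?_
    rw [← ENNReal.ofReal_add (by positivity) (by
      have := Real.rpow_nonneg (Nat.cast_nonneg n) (1-1/γ)
      positivity)]
    apply ENNReal.ofReal_le_ofReal
    have hnn : 0 ≤ (n:ℝ) ^ (1-1/γ) := Real.rpow_nonneg (Nat.cast_nonneg n) _
    have hCle : C₁ + C₂ ≤ C := le_max_left _ _
    calc C₁ * (n:ℝ) ^ (1-1/γ) + C₂ * (n:ℝ) ^ (1-1/γ) = (C₁ + C₂) * (n:ℝ) ^ (1-1/γ) := by ring
      _ ≤ C * (n:ℝ) ^ (1-1/γ) := mul_le_mul_of_nonneg_right hCle hnn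
  · -- small n
    have hle : (n:ℝ) ≤ (N:ℝ) + 2 := by
      push_cast
      have : n ≤ N + 2 := by omega
      exact_mod_cast by exact_mod_cast Nat.cast_le.mpr this
    have hn1 : (1:ℝ) ≤ (n:ℝ) := by exact_mod_cast hn
    have h1 : ((N:ℝ)+2) ^ (1-1/γ) ≤ (n:ℝ) ^ (1-1/γ) :=
      Real.rpow_le_rpow_of_nonpos (by linarith) hle hexp
    have h2 : (1:ℝ) ≤ C * (n:ℝ) ^ (1-1/γ) := by
      have h3 : ((N:ℝ)+2) ^ (1/γ-1) * ((N:ℝ)+2) ^ (1-1/γ) = 1 := by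
        rw [← Real.rpow_add (by positivity)]
        norm_num
      have h4 : ((N:ℝ)+2) ^ (1/γ-1) ≤ C := le_max_right _ _
      have h5 : (0:ℝ) ≤ ((N:ℝ)+2) ^ (1-1/γ) := Real.rpow_nonneg (by positivity) _
      calc (1:ℝ) = ((N:ℝ)+2) ^ (1/γ-1) * ((N:ℝ)+2) ^ (1-1/γ) := h3.symm
        _ ≤ C * ((N:ℝ)+2) ^ (1-1/γ) := mul_le_mul_of_nonneg_right h4 h5
        _ ≤ C * (n:ℝ) ^ (1-1/γ) := mul_le_mul_of_nonneg_left h1 hC0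
    calc μ {x | n ≤ τ 1 x} ≤ 1 := prob_le_one
      _ ≤ ENNReal.ofReal (C * (n:ℝ) ^ (1-1/γ)) := by
          rw [← ENNReal.ofReal_one]
          exact ENNReal.ofReal_le_ofReal h2

set_option maxHeartbeats 1000000 in
lemma part2 (γs : ℕ → ℝ) (hmem : ∀ n, 1 ≤ n → γs n ∈ Ioo (0:ℝ) 1)
    (γ : ℝ) (hγ : γ ∈ Ioo (0:ℝ) 1)
    (a : ℝ) (ha : 0 < a) (κ : ℝ) (hκ : κ ∈ Ioo (0:ℝ) 1) (N : ℕ)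
    (hfreq : ∀ n : ℕ, N ≤ n → 1 ≤ n →
      (((Finset.Icc 1 n).filter fun k => γs k ≤ γ).card : ℝ) / n ∈
        Icc (a * (1 - κ)) (a * (1 + κ)))
    (Y : Set ℝ) (hY : Y = Icc (1/2 : ℝ) 1)
    (m : Measure ℝ) (hm : m = (2 : ℝ≥0∞) • volume.restrict (Icc (1/2 : ℝ) 1))
    (τ : ℕ → ℝ → ℕ) (hτ : τ = retTime (fun i => lsv (γs i)) fun _ => Y) :
    ∃ C : ℝ, ∀ k : ℕ, 1 ≤ k → ∀ ℓ : ℕ,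
      m {x | ℓ ≤ τ k x} ≤
        ENNReal.ofReal (C * (max 1 ((ℓ : ℝ) - (4 * κ * (1 - κ)⁻¹) * k)) ^ (-1/γ)) := by
  obtain ⟨hγ0, hγ1⟩ := hγ
  obtain ⟨hκ0, hκ1⟩ := hκ
  have hκ2 : 0 < 1 - κ := by linarith
  have h2γ : (1:ℝ) < 2 ^ γ :=
    Real.one_lt_rpow_iff_of_pos (by norm_num) |>.mpr (Or.inl ⟨by norm_num, hγ0⟩)
  set Θ : ℝ := 4 * κ * (1 - κ)⁻¹ with hΘs
  have hΘ0 : 0 ≤ Θ := by rw [hΘs]; positivity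
  set δ : ℝ := (2 ^ γ - 1)/2 with hδs
  have hδ : 0 < δ := by rw [hδs]; linarith
  set c2 : ℝ := a * (1-κ) / 2 with hc2s
  have hc2 : 0 < c2 := by rw [hc2s]; positivity
  set L₀ : ℝ := max ((N:ℝ)+4) (2*(N:ℝ)/(a*(1-κ)) + 4) with hL0s
  have hL04 : (4:ℝ) ≤ L₀ := le_trans (by linarith [Nat.cast_nonneg (α := ℝ) N]) (le_max_left _ _)
  set C : ℝ := max ((max 1 L₀) ^ (1/γ)) ((δ*c2) ^ (-(1/γ))) with hCs
  have hC0 : 0 ≤ C := le_trans (Real.rpow_nonneg (by positivity) _) (le_max_left _ _)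
  have hexpeq : (-1)/γ = -(1/γ) := by ring
  refine ⟨C, fun k hk ℓ => ?_⟩
  set R : ℝ := max 1 ((ℓ:ℝ) - Θ*k) with hRs
  have hR1 : (1:ℝ) ≤ R := le_max_left _ _
  have hR0 : (0:ℝ) < R := by linarith
  have hRnn : 0 ≤ R ^ ((-1)/γ) := Real.rpow_nonneg hR0.le _
  by_cases hcase : (ℓ:ℝ) - Θ*k < L₀
  · -- small case
    have hmuniv : m univ = 1 := by
      rw [hm]
      rw [Measure.smul_apply, Measure.restrict_apply_univ, Real.volume_Icc]
      rw [show (1:ℝ) - 1/2 = 1/2 from by norm_num, smul_eq_mul,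
        show (2:ℝ≥0∞) = ENNReal.ofReal 2 from by norm_num,
        ← ENNReal.ofReal_mul (by norm_num)]
      norm_num
    have hRle : R ≤ max 1 L₀ := by
      rw [hRs]
      exact max_le (le_max_left _ _) (le_trans hcase.le (le_max_right _ _))
    have h2 : (1:ℝ) ≤ C * R ^ ((-1)/γ) := by
      have h3 : R ^ (1/γ) ≤ (max 1 L₀) ^ (1/γ) :=
        Real.rpow_le_rpow hR0.le hRle (by positivity)
      have h4 : (max 1 L₀) ^ (1/γ) ≤ C := le_max_left _ _
      have h5 : R ^ (1/γ) * R ^ ((-1)/γ) = 1 := by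
        rw [← Real.rpow_add hR0, show 1/γ + (-1)/γ = 0 from by ring, Real.rpow_zero]
      calc (1:ℝ) = R ^ (1/γ) * R ^ ((-1)/γ) := h5.symm
        _ ≤ C * R ^ ((-1)/γ) :=
            mul_le_mul_of_nonneg_right (le_trans h3 h4) hRnn
    calc m {x | ℓ ≤ τ k x} ≤ m univ := measure_mono (subset_univ _)
      _ = 1 := hmuniv
      _ ≤ ENNReal.ofReal (C * R ^ ((-1)/γ)) := by
          rw [← ENNReal.ofReal_one]
          exact ENNReal.ofReal_le_ofReal h2
  · -- main case
    push_neg at hcase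
    have hRL : R = (ℓ:ℝ) - Θ*k := max_eq_right (by linarith)
    have hℓR : L₀ ≤ (ℓ:ℝ) := le_trans hcase (by nlinarith [mul_nonneg hΘ0 (Nat.cast_nonneg (α := ℝ) k)])
    have hℓN : N + 4 ≤ ℓ := by
      have : ((N:ℝ)+4) ≤ (ℓ:ℝ) := le_trans (le_max_left _ _) (hL0s ▸ hℓR)
      exact_mod_cast this
    have hℓ4 : 4 ≤ ℓ := by omega
    set G : ℕ := ((Finset.range (ℓ-2)).filter fun i => γs (k+1+i) ≤ γ).card with hGs
    set b : ℝ := (δ * (1 + (G:ℝ))) ^ (-(1/γ)) with hbs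
    have hbase : (0:ℝ) < δ * (1 + (G:ℝ)) := by positivity
    have hb0 : 0 < b := Real.rpow_pos_of_pos hbase _
    -- inclusion
    have hsub : {x | ℓ ≤ τ k x} ∩ Icc (1/2:ℝ) 1 ⊆ Icc (1/2:ℝ) (1/2 + b/2) := by
      rintro x ⟨hx, hxI⟩
      simp only [mem_setOf_eq] at hx
      rw [hτ] at hx
      unfold retTime at hx
      have hesc : ∀ j, 1 ≤ j → j < ℓ →
          seqComp (fun i => lsv (γs i)) k j x ∉ Y := tau_excursion hx
      have hx01 : x ∈ Icc (0:ℝ) 1 := ⟨by linarith [hxI.1], hxI.2⟩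
      have hy : ∀ j, 1 ≤ j → j ≤ ℓ - 1 →
          seqComp (fun i => lsv (γs i)) k j x ∈ Ico (0:ℝ) (1/2) := by
        intro j h1 h2
        have hmem' := seqComp_mem γs hmem k hk x hx01 j
        refine ⟨hmem'.1, ?_⟩
        by_contra hcon
        push_neg at hcon
        exact hesc j h1 (by omega) (hY ▸ ⟨hcon, hmem'.2⟩)
      have hob := orbit_bound γs hmem γ ⟨hγ0, hγ1⟩
        (fun j => seqComp (fun i => lsv (γs i)) k (j+1) x) (k+1) (ℓ-2) (by omega)
        (fun j hj => by
          show lsv (γs (k+(j+1))) _ = lsv (γs (k+1+j)) _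
          rw [show k+(j+1) = k+1+j from by omega])
        (fun j hj => hy (j+1) (by omega) (by omega))
      have hw0 : (fun j => seqComp (fun i => lsv (γs i)) k (j+1) x) 0 = 2 * (x - 1/2) := by
        show lsv (γs (k+0)) (seqComp _ k 0 x) = _
        exact lsv_right (not_lt.mpr hxI.1)
      rw [show seqComp (fun i => lsv (γs i)) k (0+1) x = 2 * (x - 1/2) from hw0] at hob
      refine ⟨hxI.1, ?_⟩
      have : 2 * (x - 1/2) ≤ b := hob
      linarith
    -- counting
    have hcount : ((Finset.Icc 1 (k+(ℓ-2))).filter fun i => γs i ≤ γ).card ≤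
        ((Finset.Icc 1 k).filter fun i => γs i ≤ γ).card + G := by
      have h1 := count_shift (fun i => γs i ≤ γ) (k+1) (ℓ-2) (by omega)
      have h2 : k+1-1+(ℓ-2) = k+(ℓ-2) := by omega
      have h3 : k+1-1 = k := by omega
      rw [h2, h3] at h1
      exact h1
    have hFup : (((Finset.Icc 1 k).filter fun i => γs i ≤ γ).card : ℝ) ≤
        a*(1+κ)*k + N := by
      by_cases hkN : N ≤ k
      · have := (hfreq k hkN hk).2
        have hkpos : (0:ℝ) < (k:ℝ) := by exact_mod_cast hk
        rw [div_le_iff₀ hkpos] at this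
        have hN0 : (0:ℝ) ≤ N := Nat.cast_nonneg _
        linarith
      · have h4 : ((Finset.Icc 1 k).filter fun i => γs i ≤ γ).card ≤ k :=
          le_trans (Finset.card_filter_le _ _) (by simp)
        have h5 : ((((Finset.Icc 1 k).filter fun i => γs i ≤ γ).card : ℕ) : ℝ) ≤ (k:ℝ) := by
          exact_mod_cast h4
        have h6 : (k:ℝ) ≤ (N:ℝ) := by
          have : k ≤ N := by omega
          exact_mod_cast this
        have h7 : 0 ≤ a*(1+κ)*(k:ℝ) := by positivity
        linarith
    have hFlow : a*(1-κ)*((k:ℝ)+(ℓ:ℝ)-2) ≤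
        (((Finset.Icc 1 (k+(ℓ-2))).filter fun i => γs i ≤ γ).card : ℝ) := by
      have h1 : N ≤ k+(ℓ-2) := by omega
      have h2 : 1 ≤ k+(ℓ-2) := by omega
      have := (hfreq _ h1 h2).1
      have hpos : (0:ℝ) < ((k+(ℓ-2):ℕ):ℝ) := by
        have : (1:ℝ) ≤ ((k+(ℓ-2):ℕ):ℝ) := by exact_mod_cast h2
        linarith
      rw [le_div_iff₀ hpos] at this
      have hcast : ((k+(ℓ-2):ℕ):ℝ) = (k:ℝ)+(ℓ:ℝ)-2 := by
        push_cast [Nat.cast_sub (show 2 ≤ ℓ from by omega)]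
        ring
      rw [hcast] at this
      exact this
    have hGlow : c2 * R ≤ 1 + (G:ℝ) := by
      have hGcast : (((Finset.Icc 1 (k+(ℓ-2))).filter fun i => γs i ≤ γ).card : ℝ) ≤
          (((Finset.Icc 1 k).filter fun i => γs i ≤ γ).card : ℝ) + (G:ℝ) := by
        exact_mod_cast hcount
      have hG1 : a*(1-κ)*((k:ℝ)+(ℓ:ℝ)-2) - (a*(1+κ)*k + N) ≤ (G:ℝ) := by linarith
      have hℓbig : 2*(N:ℝ)/(a*(1-κ)) + 4 ≤ (ℓ:ℝ) := le_trans (le_max_right _ _) (hL0s ▸ hℓR)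
      have h7 : 2*(N:ℝ) ≤ ((ℓ:ℝ)-4)*(a*(1-κ)) := by
        have h9 : 2*(N:ℝ)/(a*(1-κ)) ≤ (ℓ:ℝ)-4 := by linarith
        exact (div_le_iff₀ (by positivity)).mp h9
      have hΘk : c2 * (Θ*(k:ℝ)) = 2*a*κ*(k:ℝ) := by
        rw [hc2s, hΘs]
        field_simp
        ring
      rw [hRL]
      nlinarith [hG1, h7, hΘk]
    have hble : b ≤ (δ*c2) ^ (-(1/γ)) * R ^ (-(1/γ)) := by
      have h1 : δ * (c2 * R) ≤ δ * (1 + (G:ℝ)) := mul_le_mul_of_nonneg_left hGlow hδ.le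
      have h2 : (0:ℝ) < δ * (c2 * R) := by positivity
      have h3 : b ≤ (δ * (c2 * R)) ^ (-(1/γ)) := by
        rw [hbs]
        exact Real.rpow_le_rpow_of_nonpos h2 h1
          (neg_nonpos.mpr (le_of_lt (div_pos one_pos hγ0)))
      refine h3.trans (le_of_eq ?_)
      rw [show δ * (c2 * R) = (δ*c2) * R from by ring,
        Real.mul_rpow (by positivity) hR0.le]
    -- measure bound
    have hmval : m {x | ℓ ≤ τ k x} ≤ ENNReal.ofReal b := by
      rw [hm, Measure.smul_apply, Measure.restrict_apply' measurableSet_Icc]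
      have h1 : volume ({x | ℓ ≤ τ k x} ∩ Icc (1/2:ℝ) 1) ≤ ENNReal.ofReal (b/2) := by
        refine le_trans (measure_mono hsub) ?_
        rw [Real.volume_Icc]
        apply ENNReal.ofReal_le_ofReal
        ring_nf
        exact le_rfl
      calc (2:ℝ≥0∞) • volume ({x | ℓ ≤ τ k x} ∩ Icc (1/2:ℝ) 1)
          ≤ (2:ℝ≥0∞) • ENNReal.ofReal (b/2) := by
            exact smul_le_smul_of_nonneg_left h1 (by positivity)
        _ = ENNReal.ofReal b := by
            rw [smul_eq_mul, show (2:ℝ≥0∞) = ENNReal.ofReal 2 from by norm_num,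
              ← ENNReal.ofReal_mul (by norm_num)]
            congr 1
            ring
    refine hmval.trans (ENNReal.ofReal_le_ofReal ?_)
    have hfin : (δ*c2) ^ (-(1/γ)) * R ^ (-(1/γ)) ≤ C * R ^ ((-1)/γ) := by
      rw [hexpeq]
      exact mul_le_mul_of_nonneg_right (le_max_right _ _) (Real.rpow_nonneg hR0.le _)
    exact hble.trans hfin

theorem stmt7 (γs : ℕ → ℝ) (hmem : ∀ n, 1 ≤ n → γs n ∈ Ioo (0:ℝ) 1)
    (γstar : ℝ) (hstar : γstar < 1) (hub : ∀ n, 1 ≤ n → γs n ≤ γstar)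
    (γ : ℝ) (hγ : γ ∈ Ioo (0:ℝ) 1) (aβ : ℝ) (haβ : 2 ^ γ * (γ + 2) < aβ)
    (a : ℝ) (ha : 0 < a) (κ : ℝ) (hκ : κ ∈ Ioo (0:ℝ) 1) (N : ℕ)
    (hfreq : ∀ n : ℕ, N ≤ n → 1 ≤ n →
      (((Finset.Icc 1 n).filter fun k => γs k ≤ γ).card : ℝ) / n ∈
        Icc (a * (1 - κ)) (a * (1 + κ)))
    (μ : Measure ℝ) (hμ : IsProbabilityMeasure μ) (hcone : ConeDensity γ aβ μ)
    -- the reference set `Y = [1/2,1]`, normalized Lebesgue measure on `Y`, and return times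
    (Y : Set ℝ) (hY : Y = Icc (1/2 : ℝ) 1)
    (m : Measure ℝ) (hm : m = (2 : ℝ≥0∞) • volume.restrict (Icc (1/2 : ℝ) 1))
    (τ : ℕ → ℝ → ℕ) (hτ : τ = retTime (fun i => lsv (γs i)) fun _ => Y) :
    -- (1) μ has tail bound r(n) = O(n^{1-1/γ}) w.r.t. T_1, T_2, …
    (∃ C : ℝ, ∀ n : ℕ, 1 ≤ n →
      μ {x | n ≤ τ 1 x} ≤ ENNReal.ofReal (C * (n : ℝ) ^ (1 - 1/γ))) ∧
    -- (2) h^k(ℓ) ≤ C (1 ∨ (ℓ - Θ k))^{-1/γ} with Θ = 4κ(1-κ)⁻¹, C independent of k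
    (∃ C : ℝ, ∀ k : ℕ, 1 ≤ k → ∀ ℓ : ℕ,
      m {x | ℓ ≤ τ k x} ≤
        ENNReal.ofReal (C * (max 1 ((ℓ : ℝ) - (4 * κ * (1 - κ)⁻¹) * k)) ^ (-1/γ))) := by
  obtain ⟨f, ⟨hf1, hf2, hf3, hf4, hf5, hf6⟩, hμdef⟩ := hcone
  constructor
  · exact part1 γs hmem γ hγ aβ haβ a ha κ hκ N hfreq μ hμ f hf2 hf3 hf6 hμdef Y hY τ hτ
  · exact part2 γs hmem γ hγ a ha κ hκ N hfreq Y hY m hm τ hτ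

end
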